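/- Let C be a strongly finitely aligned conical cancellative category with finitely many identities. Let α : XC → YC be a bijective morphism of right ideals between finitely generated essential right ideals with α(X) = Y, and let Z be a maximal code with ZC ⊆ XC. Then α(Z) is a maximal code. -/
import Mathlib


open CategoryTheory

universe u v

namespace KGraphPaper

/-- The set of all morphisms of a category, encoded as triples
`⟨source, target, hom⟩`.  The "source" of `m` is `m.1` and the "target" is `m.2.1`. -/
abbrev Mor (C : Type u) [Category.{v} C] : Type (max u v) := Σ (x y : C), x ⟶ y

variable {C : Type u} [Category.{v} C]

/-- `Comp a b c` means: the composite `ab` is defined (the source of `a` equals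
the target of `b`) and equals `c`. -/
def Comp (a b c : Mor C) : Prop :=
  ∃ (x y z : C) (f : y ⟶ z) (g : x ⟶ y),
    a = ⟨y, z, f⟩ ∧ b = ⟨x, y, g⟩ ∧ c = ⟨x, z, g ≫ f⟩

/-- The principal right ideal `aC = {ax : x a morphism with ax defined}`. -/
def princ (a : Mor C) : Set (Mor C) := {c | ∃ b, Comp a b c}

/-- `XC = ⋃_{x ∈ X} xC`. -/
def idealOf (X : Set (Mor C)) : Set (Mor C) := ⋃ x ∈ X, princ x

/-- A right ideal: closed under composition on the right. -/
def IsRightIdeal (R : Set (Mor C)) : Prop :=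
  ∀ r ∈ R, ∀ s c : Mor C, Comp r s c → c ∈ R

/-- A finitely generated right ideal: `R = XC` with `X` finite. -/
def FG (R : Set (Mor C)) : Prop := ∃ X : Set (Mor C), X.Finite ∧ R = idealOf X

/-- `m` is an identity morphism. -/
def IsId (m : Mor C) : Prop := ∃ x : C, m = ⟨x, x, 𝟙 x⟩

/-- `C` has only finitely many identities. -/
def FinIds (C : Type u) [Category.{v} C] : Prop := {m : Mor C | IsId m}.Finite

/-- A right ideal `R` is essential if `R ∩ aC ≠ ∅` for every morphism `a`. -/
def Essential (R : Set (Mor C)) : Prop := ∀ a : Mor C, (R ∩ princ a).Nonempty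

/-- `a` and `b` are dependent if `aC ∩ bC ≠ ∅`. -/
def Dependent (a b : Mor C) : Prop := (princ a ∩ princ b).Nonempty

/-- `X` is large in `C`: every morphism is dependent on some element of `X`. -/
def LargeIn (X : Set (Mor C)) : Prop := ∀ a : Mor C, ∃ x ∈ X, Dependent a x

/-- `C` is cancellative: `ab = ab' → b = b'` and `ba = b'a → b = b'`. -/
def Cancellative (C : Type u) [Category.{v} C] : Prop :=
  (∀ a b b' c : Mor C, Comp a b c → Comp a b' c → b = b') ∧
  (∀ a b b' c : Mor C, Comp b a c → Comp b' a c → b = b')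

/-- `C` is conical: the only invertible morphisms are the identities. -/
def Conical (C : Type u) [Category.{v} C] : Prop :=
  ∀ a b : Mor C, (∃ c, Comp a b c ∧ IsId c) → (∃ c, Comp b a c ∧ IsId c) → IsId a

/-- `C` is finitely aligned: each `aC ∩ bC` is a finitely generated right ideal. -/
def FinitelyAligned (C : Type u) [Category.{v} C] : Prop :=
  ∀ a b : Mor C, FG (princ a ∩ princ b)

/-- `θ` is a morphism of right ideals on `R`: whenever `rs` is defined with `r ∈ R`,
`θ(r)s` is defined and `θ(rs) = θ(r)s`. -/
def RIMorOn (R : Set (Mor C)) (θ : Mor C → Mor C) : Prop :=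
  ∀ r ∈ R, ∀ s c : Mor C, Comp r s c → Comp (θ r) s (θ c)

/-- A code: a finite set of pairwise independent morphisms. -/
def Code (U : Set (Mor C)) : Prop :=
  U.Finite ∧ ∀ a ∈ U, ∀ b ∈ U, a ≠ b → ¬ Dependent a b

/-- A maximal code: a code which is large in `C`. -/
def MaximalCode (U : Set (Mor C)) : Prop := Code U ∧ LargeIn U

/-- `C` is strongly finitely aligned: each `aC ∩ bC` is empty or generated by a code. -/
def StronglyFinitelyAligned (C : Type u) [Category.{v} C] : Prop :=
  ∀ a b : Mor C, princ a ∩ princ b = ∅ ∨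
    ∃ S : Set (Mor C), Code S ∧ princ a ∩ princ b = idealOf S

/-- `xy⁻¹ ≤ uv⁻¹` for basic morphisms: `yC ⊆ vC` and `uv⁻¹` agrees with `xy⁻¹` on `yC`. -/
def basicLE (x y u v : Mor C) : Prop :=
  princ y ⊆ princ v ∧
  ∀ z s t w w' : Mor C, Comp y s z → Comp x s w → Comp v t z → Comp u t w' → w = w'

end KGraphPaper

open KGraphPaper

section Helpers

variable {C : Type u} [Category.{v} C]

lemma comp_src {a b c : Mor C} (h : Comp a b c) : a.1 = b.2.1 := by
  obtain ⟨x, y, z, f, g, rfl, rfl, rfl⟩ := h; rfl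

lemma comp_unique {a b c c' : Mor C} (h : Comp a b c) (h' : Comp a b c') : c = c' := by
  obtain ⟨x, y, z, f, g, rfl, rfl, rfl⟩ := h
  obtain ⟨x', y', z', f', g', ha, hb, rfl⟩ := h'
  obtain ⟨rfl, h2⟩ := Sigma.mk.inj_iff.mp ha
  obtain ⟨rfl, h3⟩ := Sigma.mk.inj_iff.mp (eq_of_heq h2)
  obtain ⟨rfl, h4⟩ := Sigma.mk.inj_iff.mp hb
  have h5 := eq_of_heq (Sigma.mk.inj_iff.mp (eq_of_heq h4)).2
  rw [eq_of_heq h3, h5]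

lemma comp_def (r s : Mor C) (h : r.1 = s.2.1) : ∃ c, Comp r s c := by
  obtain ⟨ry, rz, f⟩ := r
  obtain ⟨sx, sy, g⟩ := s
  simp only at h
  subst h
  exact ⟨⟨sx, rz, g ≫ f⟩, sx, ry, rz, f, g, rfl, rfl, rfl⟩

lemma comp_assoc {x b r s c : Mor C} (h1 : Comp x b r) (h2 : Comp r s c) :
    ∃ d, Comp b s d ∧ Comp x d c := by
  obtain ⟨x1, y1, z1, f, g, rfl, rfl, rfl⟩ := h1
  obtain ⟨x2, y2, z2, f2, g2, hr, rfl, rfl⟩ := h2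
  obtain ⟨rfl, h3⟩ := Sigma.mk.inj_iff.mp hr
  obtain ⟨rfl, h4⟩ := Sigma.mk.inj_iff.mp (eq_of_heq h3)
  have h5 := eq_of_heq h4
  subst h5
  refine ⟨⟨x2, y1, g2 ≫ g⟩, ⟨x2, x1, y1, g, g2, rfl, rfl, rfl⟩,
    ⟨x2, y1, z1, f, g2 ≫ g, rfl, rfl, ?_⟩⟩
  simp [Category.assoc]

lemma self_mem_princ (a : Mor C) : a ∈ princ a := by
  obtain ⟨x, y, f⟩ := a
  exact ⟨⟨x, x, 𝟙 x⟩, x, x, y, f, 𝟙 x, rfl, rfl, by simp⟩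

lemma ideal_closed {X : Set (Mor C)} {r s c : Mor C} (hr : r ∈ idealOf X)
    (h : Comp r s c) : c ∈ idealOf X := by
  obtain ⟨x, hx, b, hb⟩ : ∃ x ∈ X, ∃ b, Comp x b r := by
    obtain ⟨x, hx, hb⟩ := Set.mem_iUnion₂.mp hr
    exact ⟨x, hx, hb⟩
  obtain ⟨d, hd1, hd2⟩ := comp_assoc hb h
  exact Set.mem_biUnion hx ⟨d, hd2⟩

lemma src_preserved {X : Set (Mor C)} {α : Mor C → Mor C} (hmor : RIMorOn (idealOf X) α)
    {r : Mor C} (hr : r ∈ idealOf X) : (α r).1 = r.1 := by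
  obtain ⟨x, y, f⟩ := r
  have hc : Comp (⟨x, y, f⟩ : Mor C) ⟨x, x, 𝟙 x⟩ ⟨x, y, f⟩ :=
    ⟨x, x, y, f, 𝟙 x, rfl, rfl, by simp⟩
  exact comp_src (hmor _ hr _ _ hc)

end Helpers

/-- if `α : XC → YC` is a bijective morphism between finitely
generated essential right ideals with `α(X) = Y`, and `Z` is a maximal code with
`ZC ⊆ XC`, then `α(Z)` is a maximal code. -/
theorem stmt_11 (C : Type u) [Category.{v} C] (hSFA : StronglyFinitelyAligned C)
    (hCon : Conical C) (hCan : Cancellative C) (hFin : FinIds C)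
    (X Y : Set (Mor C)) (hX : X.Finite) (hY : Y.Finite)
    (hXe : Essential (idealOf X)) (hYe : Essential (idealOf Y))
    (α : Mor C → Mor C) (hbij : Set.BijOn α (idealOf X) (idealOf Y))
    (hmor : RIMorOn (idealOf X) α) (himg : α '' X = Y)
    (Z : Set (Mor C)) (hZ : MaximalCode Z) (hZsub : idealOf Z ⊆ idealOf X) :
    MaximalCode (α '' Z) := by
  have hZX : ∀ z ∈ Z, z ∈ idealOf X := fun z hz =>
    hZsub (Set.mem_biUnion hz (self_mem_princ z))
  constructor
  · constructor
    · exact hZ.1.1.image α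
    · rintro a ⟨z, hz, rfl⟩ b ⟨z', hz', rfl⟩ hne ⟨w, ⟨s, hws⟩, ⟨t, hwt⟩⟩
      have hzz' : z ≠ z' := fun h => hne (by rw [h])
      -- w = α c for some c ∈ zC
      have hsz : z.1 = s.2.1 := by rw [← src_preserved hmor (hZX z hz)]; exact comp_src hws
      obtain ⟨c, hc⟩ := comp_def z s hsz
      have hαc := hmor z (hZX z hz) s c hc
      have hw1 : w = α c := comp_unique hws hαc
      have htz : z'.1 = t.2.1 := by
        rw [← src_preserved hmor (hZX z' hz')]; exact comp_src hwt
      obtain ⟨c', hc'⟩ := comp_def z' t htz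
      have hαc' := hmor z' (hZX z' hz') t c' hc'
      have hw2 : w = α c' := comp_unique hwt hαc'
      have hcX : c ∈ idealOf X := hZsub (Set.mem_biUnion hz ⟨s, hc⟩)
      have hc'X : c' ∈ idealOf X := hZsub (Set.mem_biUnion hz' ⟨t, hc'⟩)
      have : c = c' := hbij.injOn hcX hc'X (by rw [← hw1, ← hw2])
      exact hZ.1.2 z hz z' hz' hzz' ⟨c, ⟨s, hc⟩, this ▸ ⟨t, hc'⟩⟩
  · intro a
    obtain ⟨w, hwY, u, hwu⟩ := hYe a
    obtain ⟨r, hrX, rfl⟩ := hbij.surjOn hwY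
    obtain ⟨z, hz, c, ⟨s, hcr⟩, ⟨t, hcz⟩⟩ := hZ.2 r
    have h1 : Comp (α r) s (α c) := hmor r hrX s c hcr
    have h2 : Comp (α z) t (α c) := hmor z (hZX z hz) t c hcz
    obtain ⟨d, _, hd⟩ := comp_assoc hwu h1
    exact ⟨α z, ⟨z, hz, rfl⟩, α c, ⟨d, hd⟩, ⟨t, h2⟩⟩
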